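/- arXiv:2502.10741 — 3 statements merged into one kernel-verified Lean document; each statement's English description precedes it below -/
import Mathlib

section
/- For β > 0 and probability densities p, q on a measure space, the density power divergence D_β(p‖q) := (1/(β(1+β)))∫p^{1+β} − (1/β)∫p q^β + (1/(1+β))∫q^{1+β} is nonnegative, and equals zero if and only if p = q almost everywhere. -/
/-!
Young's inequality `a * b ^ β ≤ (a ^ (1 + β) + β * b ^ (1 + β)) / (1 + β)` for `a, b ≥ 0`
(weighted AM-GM for `a ^ (1 + β)`, `b ^ (1 + β)` with weights `1 / (1 + β)`, `β / (1 + β)`) is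
strict unless `a = b`, so the integrand of the divergence is nonnegative and vanishes exactly where
`p = q`; a nonnegative integrable function has integral zero iff it vanishes a.e.
-/

open MeasureTheory Real

section Young

variable {β a b : ℝ}

theorem mul_rpow_lt_young_iff_ne (hβ : 0 < β) (ha : 0 ≤ a) (hb : 0 ≤ b) :
    a * b ^ β < (a ^ (1 + β) + β * b ^ (1 + β)) / (1 + β) ↔ a ≠ b := by
  have h1β : 0 < 1 + β := by linarith
  have key := geom_mean_lt_arith_mean2_weighted_iff_of_pos (w₁ := 1 / (1 + β))
    (w₂ := β / (1 + β)) (p₁ := a ^ (1 + β)) (p₂ := b ^ (1 + β)) (by positivity) (by positivity)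
    (by positivity) (by positivity) (by field_simp)
  rw [← rpow_mul ha, ← rpow_mul hb, Ne, rpow_left_inj ha hb h1β.ne',
    mul_one_div_cancel h1β.ne', mul_div_cancel₀ _ h1β.ne', rpow_one] at key
  convert key using 2
  ring

theorem mul_rpow_le_young (hβ : 0 < β) (ha : 0 ≤ a) (hb : 0 ≤ b) :
    a * b ^ β ≤ (a ^ (1 + β) + β * b ^ (1 + β)) / (1 + β) := by
  rcases eq_or_ne a b with rfl | hne
  · have h1β : 1 + β ≠ 0 := by linarith
    rw [rpow_add' ha h1β, rpow_one, ← one_add_mul, mul_div_cancel_left₀ _ h1β]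
  · exact ((mul_rpow_lt_young_iff_ne hβ ha hb).2 hne).le

end Young

noncomputable def dpdIntegrand (β a b : ℝ) : ℝ :=
  1 / (β * (1 + β)) * a ^ (1 + β) - 1 / β * (a * b ^ β) + 1 / (1 + β) * b ^ (1 + β)

section Integrand

variable {β a b : ℝ}

theorem dpdIntegrand_eq_young_gap (hβ : 0 < β) :
    dpdIntegrand β a b = ((a ^ (1 + β) + β * b ^ (1 + β)) / (1 + β) - a * b ^ β) / β := by
  have h1β : 1 + β ≠ 0 := by linarith
  unfold dpdIntegrand
  field_simp
  ring

theorem dpdIntegrand_nonneg (hβ : 0 < β) (ha : 0 ≤ a) (hb : 0 ≤ b) : 0 ≤ dpdIntegrand β a b := by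
  rw [dpdIntegrand_eq_young_gap hβ]
  exact div_nonneg (sub_nonneg.2 (mul_rpow_le_young hβ ha hb)) hβ.le

theorem dpdIntegrand_eq_zero_iff (hβ : 0 < β) (ha : 0 ≤ a) (hb : 0 ≤ b) :
    dpdIntegrand β a b = 0 ↔ a = b := by
  rw [dpdIntegrand_eq_young_gap hβ, div_eq_zero_iff, or_iff_left hβ.ne', sub_eq_zero,
    ← not_iff_not, ← Ne, ← (mul_rpow_le_young hβ ha hb).lt_iff_ne', mul_rpow_lt_young_iff_ne hβ ha hb]

end Integrand

section Integral

variable {α : Type*} [MeasurableSpace α] {μ : Measure α} {β : ℝ} {p q : α → ℝ}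

theorem integrable_dpdIntegrand (hippb : Integrable (fun x => p x ^ (1 + β)) μ)
    (hipqb : Integrable (fun x => p x * q x ^ β) μ)
    (hiqqb : Integrable (fun x => q x ^ (1 + β)) μ) :
    Integrable (fun x => dpdIntegrand β (p x) (q x)) μ :=
  ((hippb.const_mul _).sub (hipqb.const_mul _)).add (hiqqb.const_mul _)

theorem integral_dpdIntegrand (hippb : Integrable (fun x => p x ^ (1 + β)) μ)
    (hipqb : Integrable (fun x => p x * q x ^ β) μ)
    (hiqqb : Integrable (fun x => q x ^ (1 + β)) μ) :
    ∫ x, dpdIntegrand β (p x) (q x) ∂μ = (1 / (β * (1 + β))) * (∫ x, p x ^ (1 + β) ∂μ)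
        - (1 / β) * (∫ x, p x * q x ^ β ∂μ) + (1 / (1 + β)) * (∫ x, q x ^ (1 + β) ∂μ) := by
  unfold dpdIntegrand
  rw [integral_add ((hippb.const_mul _).sub' (hipqb.const_mul _)) (hiqqb.const_mul _),
    integral_sub (hippb.const_mul _) (hipqb.const_mul _),
    integral_const_mul, integral_const_mul, integral_const_mul]

end Integral

theorem dpd_nonneg_and_eq_zero_iff_general
    {α : Type*} [MeasurableSpace α] (μ : Measure α)
    (β : ℝ) (hβ : 0 < β)
    (p q : α → ℝ)
    (hp0 : ∀ x, 0 ≤ p x) (hq0 : ∀ x, 0 ≤ q x)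
    (hippb : Integrable (fun x => p x ^ (1 + β)) μ)
    (hipqb : Integrable (fun x => p x * q x ^ β) μ)
    (hiqqb : Integrable (fun x => q x ^ (1 + β)) μ) :
    0 ≤ (1 / (β * (1 + β))) * (∫ x, p x ^ (1 + β) ∂μ)
        - (1 / β) * (∫ x, p x * q x ^ β ∂μ)
        + (1 / (1 + β)) * (∫ x, q x ^ (1 + β) ∂μ) ∧
    ((1 / (β * (1 + β))) * (∫ x, p x ^ (1 + β) ∂μ)
        - (1 / β) * (∫ x, p x * q x ^ β ∂μ)
        + (1 / (1 + β)) * (∫ x, q x ^ (1 + β) ∂μ) = 0 ↔ p =ᵐ[μ] q) := by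
  have hnonneg : 0 ≤ fun x => dpdIntegrand β (p x) (q x) :=
    fun x => dpdIntegrand_nonneg hβ (hp0 x) (hq0 x)
  rw [← integral_dpdIntegrand hippb hipqb hiqqb,
    integral_eq_zero_iff_of_nonneg hnonneg (integrable_dpdIntegrand hippb hipqb hiqqb)]
  exact ⟨integral_nonneg hnonneg, Filter.eventually_congr
    (.of_forall fun x => dpdIntegrand_eq_zero_iff hβ (hp0 x) (hq0 x))⟩

/-- Nonnegativity of the density power divergence, and its vanishing iff `p = q` a.e. -/
theorem dpd_nonneg_and_eq_zero_iff
    {α : Type*} [MeasurableSpace α] (μ : Measure α) [SigmaFinite μ]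
    (β : ℝ) (hβ : 0 < β)
    (p q : α → ℝ)
    (hpm : Measurable p) (hqm : Measurable q)
    (hp0 : ∀ x, 0 ≤ p x) (hq0 : ∀ x, 0 ≤ q x)
    (hp1 : ∫ x, p x ∂μ = 1) (hq1 : ∫ x, q x ∂μ = 1)
    (hippb : Integrable (fun x => p x ^ (1 + β)) μ)
    (hipqb : Integrable (fun x => p x * q x ^ β) μ)
    (hiqqb : Integrable (fun x => q x ^ (1 + β)) μ) :
    0 ≤ (1 / (β * (1 + β))) * (∫ x, p x ^ (1 + β) ∂μ)
        - (1 / β) * (∫ x, p x * q x ^ β ∂μ)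
        + (1 / (1 + β)) * (∫ x, q x ^ (1 + β) ∂μ) ∧
    ((1 / (β * (1 + β))) * (∫ x, p x ^ (1 + β) ∂μ)
        - (1 / β) * (∫ x, p x * q x ^ β ∂μ)
        + (1 / (1 + β)) * (∫ x, q x ^ (1 + β) ∂μ) = 0 ↔ p =ᵐ[μ] q) :=
  dpd_nonneg_and_eq_zero_iff_general μ β hβ p q hp0 hq0 hippb hipqb hiqqb
end

section
/- As β → 0⁺, the density power divergence D_β(p‖q) converges to the Kullback–Leibler divergence KL(p‖q) = ∫ p log(p/q). -/
/-!
Writing `f ^ β = 1 + β * (β⁻¹ * (f ^ β - 1))`, the normalisation `∫ p = ∫ q` cancels the terms of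
`D_β(p‖q)` of order `β⁻¹`, leaving integrals of the difference quotients `β⁻¹ * (f ^ β - 1)`
against `p` and `q`. These tend pointwise to `log f` as `β → 0⁺`, and for `c ≤ f ≤ C`,
`0 < β ≤ 1` they lie between `log c` and `C - 1` (by `1 + x ≤ exp x` and Bernoulli's inequality),
so dominated convergence applies.
-/

open MeasureTheory Filter Set Real Topology

namespace Real

lemma log_le_inv_mul_rpow_sub_one {a β : ℝ} (ha : 0 < a) (hβ : 0 < β) :
    log a ≤ β⁻¹ * (a ^ β - 1) := by
  rw [le_inv_mul_iff₀ hβ, rpow_def_of_pos ha]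
  linarith [add_one_le_exp (log a * β)]

lemma inv_mul_rpow_sub_one_le_sub_one {a β : ℝ} (ha : 0 ≤ a) (hβ₀ : 0 < β) (hβ₁ : β ≤ 1) :
    β⁻¹ * (a ^ β - 1) ≤ a - 1 := by
  have h := rpow_one_add_le_one_add_mul_self (s := a - 1) (by linarith) hβ₀.le hβ₁
  rw [add_sub_cancel] at h
  rw [inv_mul_le_iff₀ hβ₀]
  linarith

lemma abs_inv_mul_rpow_sub_one_le {a c C β : ℝ} (hc : 0 < c) (ha : a ∈ Icc c C)
    (hβ₀ : 0 < β) (hβ₁ : β ≤ 1) : |β⁻¹ * (a ^ β - 1)| ≤ max |log c| |C - 1| :=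
  abs_le_max_abs_abs
    ((log_le_log hc ha.1).trans (log_le_inv_mul_rpow_sub_one (hc.trans_le ha.1) hβ₀))
    ((inv_mul_rpow_sub_one_le_sub_one (hc.le.trans ha.1) hβ₀ hβ₁).trans (by linarith [ha.2]))

lemma abs_log_le_of_mem_Icc {a c C : ℝ} (hc : 0 < c) (ha : a ∈ Icc c C) :
    |log a| ≤ max |log c| |log C| :=
  abs_le_max_abs_abs (log_le_log hc ha.1) (log_le_log (hc.trans_le ha.1) ha.2)

end Real

section

variable {α : Type*} [MeasurableSpace α] {μ : Measure α} {w f : α → ℝ} {c C : ℝ}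

lemma integrable_mul_log (hw : Integrable w μ) (hf : AEMeasurable f μ) (hc : 0 < c)
    (hfb : ∀ᵐ x ∂μ, f x ∈ Icc c C) : Integrable (fun x => w x * log (f x)) μ :=
  hw.mul_bdd hf.log.aestronglyMeasurable
    (hfb.mono fun _ hx => (norm_eq_abs _).trans_le (abs_log_le_of_mem_Icc hc hx))

lemma integrable_mul_inv_mul_rpow_sub_one (hw : Integrable w μ) (hf : AEMeasurable f μ)
    (hc : 0 < c) (hfb : ∀ᵐ x ∂μ, f x ∈ Icc c C) {β : ℝ} (hβ₀ : 0 < β) (hβ₁ : β ≤ 1) :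
    Integrable (fun x => w x * (β⁻¹ * (f x ^ β - 1))) μ :=
  hw.mul_bdd (((hf.pow_const β).sub_const 1).const_mul β⁻¹).aestronglyMeasurable
    (hfb.mono fun _ hx => (norm_eq_abs _).trans_le (abs_inv_mul_rpow_sub_one_le hc hx hβ₀ hβ₁))

lemma integral_mul_rpow_eq (hw : Integrable w μ) (hf : AEMeasurable f μ)
    (hc : 0 < c) (hfb : ∀ᵐ x ∂μ, f x ∈ Icc c C) {β : ℝ} (hβ₀ : 0 < β) (hβ₁ : β ≤ 1) :
    ∫ x, w x * f x ^ β ∂μ = ∫ x, w x ∂μ + β * ∫ x, w x * (β⁻¹ * (f x ^ β - 1)) ∂μ := by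
  rw [← integral_const_mul, ← integral_add hw
    ((integrable_mul_inv_mul_rpow_sub_one hw hf hc hfb hβ₀ hβ₁).const_mul β)]
  congr with x
  field_simp
  ring

lemma tendsto_integral_mul_inv_mul_rpow_sub_one (hw : Integrable w μ) (hf : AEMeasurable f μ)
    (hc : 0 < c) (hfb : ∀ᵐ x ∂μ, f x ∈ Icc c C) :
    Tendsto (fun β => ∫ x, w x * (β⁻¹ * (f x ^ β - 1)) ∂μ) (𝓝[>] 0)
      (𝓝 (∫ x, w x * log (f x) ∂μ)) := by
  refine tendsto_integral_filter_of_dominated_convergence (fun x => |w x| * max |log c| |C - 1|)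
    (.of_forall fun β => hw.aestronglyMeasurable.mul
      (((hf.pow_const β).sub_const 1).const_mul β⁻¹).aestronglyMeasurable)
    ?_ (hw.abs.mul_const _) ?_
  · filter_upwards [Ioc_mem_nhdsGT one_pos] with β hβ
    filter_upwards [hfb] with x hx
    rw [norm_mul, norm_eq_abs, norm_eq_abs]
    exact mul_le_mul_of_nonneg_left (abs_inv_mul_rpow_sub_one_le hc hx hβ.1 hβ.2) (abs_nonneg _)
  · filter_upwards [hfb] with x hx
    exact (tendsto_rpow_sub_one_log (hc.trans_le hx.1)).const_mul (w x)

lemma integral_mul_log_div {g : α → ℝ} (hw : Integrable w μ) (hf : AEMeasurable f μ)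
    (hg : AEMeasurable g μ) (hc : 0 < c) (hfb : ∀ᵐ x ∂μ, f x ∈ Icc c C)
    (hgb : ∀ᵐ x ∂μ, g x ∈ Icc c C) :
    ∫ x, w x * log (f x / g x) ∂μ = ∫ x, w x * log (f x) ∂μ - ∫ x, w x * log (g x) ∂μ := by
  rw [← integral_sub (integrable_mul_log hw hf hc hfb) (integrable_mul_log hw hg hc hgb)]
  refine integral_congr_ae (hfb.and hgb |>.mono fun x ⟨hfx, hgx⟩ => ?_)
  simp only [log_div (hc.trans_le hfx.1).ne' (hc.trans_le hgx.1).ne', mul_sub]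

end

noncomputable def densityPowerDivergence {α : Type*} [MeasurableSpace α] (μ : Measure α)
    (p q : α → ℝ) (β : ℝ) : ℝ :=
  1 / (β * (1 + β)) * (∫ x, p x ^ (1 + β) ∂μ) - 1 / β * (∫ x, p x * q x ^ β ∂μ)
    + 1 / (1 + β) * (∫ x, q x ^ (1 + β) ∂μ)

lemma densityPowerDivergence_eq {α : Type*} [MeasurableSpace α] {μ : Measure α} {p q : α → ℝ}
    {c C β : ℝ} (hp : Integrable p μ) (hq : Integrable q μ) (hc : 0 < c)
    (hpb : ∀ᵐ x ∂μ, p x ∈ Icc c C) (hqb : ∀ᵐ x ∂μ, q x ∈ Icc c C)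
    (hpq : ∫ x, p x ∂μ = ∫ x, q x ∂μ) (hβ₀ : 0 < β) (hβ₁ : β ≤ 1) :
    densityPowerDivergence μ p q β =
      (∫ x, p x * (β⁻¹ * (p x ^ β - 1)) ∂μ + β * ∫ x, q x * (β⁻¹ * (q x ^ β - 1)) ∂μ) / (1 + β)
        - ∫ x, p x * (β⁻¹ * (q x ^ β - 1)) ∂μ := by
  have hβ : 1 + β ≠ 0 := by positivity
  have hrpow {f : α → ℝ} (hfb : ∀ᵐ x ∂μ, f x ∈ Icc c C) :
      ∫ x, f x ^ (1 + β) ∂μ = ∫ x, f x * f x ^ β ∂μ :=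
    integral_congr_ae (hfb.mono fun x hx => rpow_one_add' (hc.le.trans hx.1) hβ)
  rw [densityPowerDivergence, hrpow hpb, hrpow hqb,
    integral_mul_rpow_eq hp hp.aemeasurable hc hpb hβ₀ hβ₁,
    integral_mul_rpow_eq hq hq.aemeasurable hc hqb hβ₀ hβ₁,
    integral_mul_rpow_eq hp hq.aemeasurable hc hqb hβ₀ hβ₁, hpq]
  field_simp
  ring

theorem dpd_tendsto_kl_general
    {α : Type*} [MeasurableSpace α] (μ : Measure α)
    (p q : α → ℝ)
    (c C : ℝ) (hc : 0 < c)
    (hpb : ∀ x, p x ∈ Set.Icc c C) (hqb : ∀ x, q x ∈ Set.Icc c C)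
    (hp1 : ∫ x, p x ∂μ = 1) (hq1 : ∫ x, q x ∂μ = 1) :
    Filter.Tendsto
      (fun β : ℝ =>
        (1 / (β * (1 + β))) * (∫ x, p x ^ (1 + β) ∂μ)
        - (1 / β) * (∫ x, p x * q x ^ β ∂μ)
        + (1 / (1 + β)) * (∫ x, q x ^ (1 + β) ∂μ))
      (nhdsWithin 0 (Set.Ioi 0))
      (nhds (∫ x, p x * Real.log (p x / q x) ∂μ)) := by
  have hp : Integrable p μ := .of_integral_ne_zero (by simp [hp1])
  have hq : Integrable q μ := .of_integral_ne_zero (by simp [hq1])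
  have hpb' : ∀ᵐ x ∂μ, p x ∈ Icc c C := .of_forall hpb
  have hqb' : ∀ᵐ x ∂μ, q x ∈ Icc c C := .of_forall hqb
  have h1β : Tendsto (fun β : ℝ => 1 + β) (𝓝[>] 0) (𝓝 1) := by
    simpa using (tendsto_const_nhds.add tendsto_id).mono_left (nhdsWithin_le_nhds (a := (0:ℝ)))
  have hAp := tendsto_integral_mul_inv_mul_rpow_sub_one hp hp.aemeasurable hc hpb'
  have hAq := tendsto_integral_mul_inv_mul_rpow_sub_one hq hq.aemeasurable hc hqb'
  have hB := tendsto_integral_mul_inv_mul_rpow_sub_one hp hq.aemeasurable hc hqb'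
  have hβ : Tendsto (fun β : ℝ => β) (𝓝[>] 0) (𝓝 0) := tendsto_nhdsWithin_of_tendsto_nhds tendsto_id
  rw [integral_mul_log_div hp hp.aemeasurable hq.aemeasurable hc hpb' hqb']
  refine Tendsto.congr' ?_ ((((hAp.add (hβ.mul hAq)).div h1β one_ne_zero).sub hB).trans_eq ?_)
  · filter_upwards [Ioc_mem_nhdsGT one_pos] with β ⟨hβ₀, hβ₁⟩
    exact (densityPowerDivergence_eq hp hq hc hpb' hqb' (hp1.trans hq1.symm) hβ₀ hβ₁).symm
  · simp

/-- As β → 0⁺, the density power divergence converges to the Kullback–Leibler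
divergence `∫ p log(p/q)`. -/
theorem dpd_tendsto_kl
    {α : Type*} [MeasurableSpace α] (μ : Measure α) [IsFiniteMeasure μ]
    (p q : α → ℝ) (hpm : Measurable p) (hqm : Measurable q)
    (c C : ℝ) (hc : 0 < c)
    (hpb : ∀ x, p x ∈ Set.Icc c C) (hqb : ∀ x, q x ∈ Set.Icc c C)
    (hp1 : ∫ x, p x ∂μ = 1) (hq1 : ∫ x, q x ∂μ = 1) :
    Filter.Tendsto
      (fun β : ℝ =>
        (1 / (β * (1 + β))) * (∫ x, p x ^ (1 + β) ∂μ)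
        - (1 / β) * (∫ x, p x * q x ^ β ∂μ)
        + (1 / (1 + β)) * (∫ x, q x ^ (1 + β) ∂μ))
      (nhdsWithin 0 (Set.Ioi 0))
      (nhds (∫ x, p x * Real.log (p x / q x) ∂μ)) :=
  dpd_tendsto_kl_general μ p q c C hc hpb hqb hp1 hq1
end

section
/- Suppose ψ_α(b; u) → ψ₀(b; u) and the Jacobians V_α(b; u) → V₀(b; u) as α → 0, uniformly over b in a compact set and u in a finite set, and suppose b̂_α solves Σ_i ψ_α(b̂_α; u_i) = 0 while b̂₀ solves Σ_i ψ₀(b̂₀; u_i) = 0. If the matrices Σ_i V_α(b̃_i; u_i) (at the Taylor intermediate points b̃_i between b̂₀ and b̂_α) are nonsingular with inverses bounded uniformly for small α ≥ 0, then ‖b̂₀ − b̂_α‖ → 0 as α → 0. -/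
open Filter

/-- Convergence of the robust divergence estimators to the MLE as the hyperparameter
`α → 0⁺`: under uniform convergence of the estimating functions, the Taylor identity
with intermediate points, and uniformly bounded inverses of the summed Jacobians,
`‖b̂₀ - b̂_α‖ → 0`. -/
theorem robust_estimator_tendsto_mle
    {J : ℕ} {U : Type*} [Fintype U]
    (I : ℕ) (u : Fin I → U)
    (K : Set (EuclideanSpace ℝ (Fin J))) (hK : IsCompact K)
    (ψ : ℝ → EuclideanSpace ℝ (Fin J) → U → EuclideanSpace ℝ (Fin J))
    (V : ℝ → EuclideanSpace ℝ (Fin J) → U →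
      (EuclideanSpace ℝ (Fin J) →L[ℝ] EuclideanSpace ℝ (Fin J)))
    (bhat : ℝ → EuclideanSpace ℝ (Fin J))
    (hbK : ∀ α, bhat α ∈ K)
    (hunif : ∀ v : U, TendstoUniformlyOn (fun α b => ψ α b v)
      (fun b => ψ 0 b v) (nhdsWithin 0 (Set.Ioi 0)) K)
    (hest : ∀ α, ∑ i, ψ α (bhat α) (u i) = 0)
    (btilde : ℝ → Fin I → EuclideanSpace ℝ (Fin J))
    (htseg : ∀ α i, btilde α i ∈ segment ℝ (bhat 0) (bhat α))
    (htaylor : ∀ α i, ψ α (bhat 0) (u i) - ψ α (bhat α) (u i)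
      = V α (btilde α i) (u i) (bhat 0 - bhat α))
    (C : ℝ) (hC : 0 < C)
    (hinv : ∀ᶠ α in nhdsWithin 0 (Set.Ioi 0),
      ∀ x, ‖x‖ ≤ C * ‖(∑ i, V α (btilde α i) (u i)) x‖) :
    Filter.Tendsto (fun α => ‖bhat 0 - bhat α‖) (nhdsWithin 0 (Set.Ioi 0))
      (nhds 0) := by
  have h1 : ∀ α, ∑ i, ψ α (bhat 0) (u i)
      = (∑ i, V α (btilde α i) (u i)) (bhat 0 - bhat α) := by
    intro α
    have : ∑ i, ψ α (bhat 0) (u i)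
        = ∑ i, (ψ α (bhat 0) (u i) - ψ α (bhat α) (u i)) := by
      rw [Finset.sum_sub_distrib, hest α, sub_zero]
    rw [this]
    simp only [htaylor α]
    rw [ContinuousLinearMap.sum_apply]
  have h2 : Filter.Tendsto (fun α => ∑ i, ψ α (bhat 0) (u i))
      (nhdsWithin 0 (Set.Ioi 0)) (nhds 0) := by
    have := hest 0
    rw [← this]
    exact tendsto_finset_sum _ fun i _ => (hunif (u i)).tendsto_at (hbK 0)
  have h3 : Filter.Tendsto (fun α => C * ‖∑ i, ψ α (bhat 0) (u i)‖)
      (nhdsWithin 0 (Set.Ioi 0)) (nhds 0) := by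
    have := (h2.norm).const_mul C
    simpa using this
  refine squeeze_zero' (Filter.Eventually.of_forall fun α => norm_nonneg _) ?_ h3
  filter_upwards [hinv] with α hα
  calc ‖bhat 0 - bhat α‖ ≤ C * ‖(∑ i, V α (btilde α i) (u i)) (bhat 0 - bhat α)‖ :=
        hα _
    _ = C * ‖∑ i, ψ α (bhat 0) (u i)‖ := by rw [h1]
end
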